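/- The expected type of a random realization equals the maximum acceptance probability: E[y(ĝ)] = f(V) = p_max, i.e., the probability that a random realization ĝ is type-1 equals the acceptance probability f(V) of inviting all users, which equals the maximum of f(I) over all invitation sets I ⊆ V. -/

import Mathlib

open Finset MeasureTheory

/-- A social network with weights, an initiator `s`, and a target user `t ∉ N_s`. -/
structure FriendNet (V : Type) [Fintype V] [DecidableEq V] where
  G : SimpleGraph V
  adjDec : DecidableRel G.Adj
  w : V → V → ℝ
  w_pos : ∀ u v : V, G.Adj u v → 0 < w u v
  w_le_one : ∀ u v : V, G.Adj u v → w u v ≤ 1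
  w_eq_zero : ∀ u v : V, ¬ G.Adj u v → w u v = 0
  w_sum_le_one : ∀ v : V, ∑ u : V, w u v ≤ 1
  s : V
  t : V
  t_ne_s : t ≠ s
  t_not_friend : ¬ G.Adj s t

variable {V : Type} [Fintype V] [DecidableEq V]

namespace FriendNet

/-- The current friends (neighbors) `N_v` of a user `v`. -/
def Nbr (net : FriendNet V) (v : V) : Finset V :=
  letI := net.adjDec
  Finset.univ.filter fun u => net.G.Adj u v

/-- `Φ(C)`: users not in `C` willing to accept an invitation, given thresholds `θ`. -/
noncomputable def Phi (net : FriendNet V) (θ : V → ℝ) (C : Finset V) : Finset V :=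
  Finset.univ.filter fun u => u ∉ C ∧ θ u ≤ ∑ v ∈ C, net.w v u

/-- One round of the friending process: `C ∪ (Φ(C) ∩ I)`. -/
noncomputable def Cstep (net : FriendNet V) (θ : V → ℝ) (I : Finset V) (C : Finset V) : Finset V :=
  C ∪ (net.Phi θ C ∩ I)

/-- `C_∞(I)`: the final set of the threshold friending process (it stabilizes after
`|V|` rounds). -/
noncomputable def Cinf (net : FriendNet V) (θ : V → ℝ) (I : Finset V) : Finset V :=
  (net.Cstep θ I)^[Fintype.card V] (net.Nbr net.s)

/-- The distribution of the thresholds: i.i.d. uniform on `[0,1]`. -/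
noncomputable def thetaMeasure (V : Type) [Fintype V] : Measure (V → ℝ) :=
  Measure.pi fun _ => volume.restrict (Set.Icc (0 : ℝ) 1)

/-- The acceptance probability `f(I)`: probability over the thresholds that `t ∈ C_∞(I)`. -/
noncomputable def f (net : FriendNet V) (I : Finset V) : ℝ :=
  (thetaMeasure V {θ : V → ℝ | net.t ∈ net.Cinf θ I}).toReal

/-- `p_max`: the maximum acceptance probability over all invitation sets. -/
noncomputable def pmax (net : FriendNet V) : ℝ := ⨆ I : Finset V, net.f I

/-- A realization: each user selects at most one current friend (`none` plays ℵ0). -/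
def IsRealization (net : FriendNet V) (g : V → Option V) : Prop :=
  ∀ v u : V, g v = some u → net.G.Adj u v

/-- `Pr[g]`, the probability of generating the realization `g`. -/
noncomputable def realWeight (net : FriendNet V) (g : V → Option V) : ℝ :=
  ∏ v : V, (g v).elim (1 - ∑ u : V, net.w u v) (fun u => net.w u v)

/-- `Ψ(H)` for a realization `g`. -/
def Psi (g : V → Option V) (H : Finset V) : Finset V :=
  Finset.univ.filter fun v => v ∉ H ∧ ∃ u ∈ H, g v = some u

/-- One round of Process 2: `H ∪ (Ψ(H) ∩ I)`. -/
def Hstep (g : V → Option V) (I : Finset V) (H : Finset V) : Finset V :=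
  H ∪ (Psi g H ∩ I)

/-- `H_∞(g, I)`: the final set of Process 2 (it stabilizes after `|V|` rounds). -/
def Hinf (net : FriendNet V) (g : V → Option V) (I : Finset V) : Finset V :=
  (Hstep g I)^[Fintype.card V] (net.Nbr net.s)

end FriendNet

/-- The loop of Algorithm 1 (backward trace), with fuel. `none` plays ℵ0. -/
def traceAux (g : V → Option V) (Ns : Finset V) : ℕ → V → Finset (Option V) → Finset (Option V)
  | 0, _, acc => acc
  | m + 1, u, acc =>
    match g u with
    | none => insert none acc
    | some v =>
      if some v ∈ acc then insert none acc
      else if v ∈ Ns then acc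
      else traceAux g Ns m v (insert (some v) acc)

namespace FriendNet

/-- The backward trace `t(g)` computed by Algorithm 1. -/
def trace (net : FriendNet V) (g : V → Option V) : Finset (Option V) :=
  traceAux g (net.Nbr net.s) (Fintype.card V + 1) net.t {some net.t}

/-- `f(g, I)`: the indicator that `I` covers `g`, i.e. `t(g) ⊆ I`. -/
noncomputable def fg (net : FriendNet V) (g : V → Option V) (I : Finset V) : ℝ :=
  if net.trace g ⊆ I.image some then 1 else 0

/-- `F(B_l, I) = Σ_{g ∈ B_l} f(g, I)`. -/
noncomputable def F (net : FriendNet V) {l : ℕ} (B : Fin l → V → Option V)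
    (I : Finset V) : ℝ :=
  ∑ i : Fin l, net.fg (B i) I

end FriendNet

instance : MeasurableSpace (V → Option V) := ⊤

/-- The distribution of a random realization `ĝ`. -/
noncomputable def FriendNet.realMeasure (net : FriendNet V) : Measure (V → Option V) :=
  ∑ g : V → Option V, ENNReal.ofReal (net.realWeight g) • Measure.dirac g

open Classical in
/-- `V_max`: users outside `{s} ∪ N_s` lying on some path from `{s} ∪ N_s` to `t`. -/
noncomputable def FriendNet.Vmax (net : FriendNet V) : Finset V :=
  Finset.univ.filter fun u =>
    u ∉ insert net.s (net.Nbr net.s) ∧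
      ∃ v ∈ insert net.s (net.Nbr net.s),
        ∃ p : net.G.Walk v net.t, p.IsPath ∧ u ∈ p.support

/-!
Both sides equal `reachProb univ t`, the solution of the recursion
`reachProb S v = Σ_u w(u,v) · reachProb (S \ {v}) u` for `v ∈ S \ N_s` (`1` on `N_s`).

For the friending process, a user `v ∈ I \ N_s` ends up a friend iff
`θ_v ≤ Σ_{u ∈ C_∞(I \ {v})} w(u,v)`. The set `C_∞(I \ {v})` never looks at `θ_v`, so it is
independent of the uniform threshold `θ_v`, and conditioning on it gives the recursion with
`S = I`. For a random realization, the backward trace from `v` through the unvisited users `S`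
moves to `u` with probability `w(u,v)`, independently of the choices of the other users, which
drive the rest of the trace; this gives the same recursion. Finally `f` is monotone in `I`, so
`p_max = f(V)`.
-/

open Function MeasureTheory ProbabilityTheory

section ProductWeights

variable {ι β R : Type*} [Fintype ι] [DecidableEq ι] [Fintype β] [CommSemiring R]
  {p : ι → β → R}

theorem sum_prod_eq_one (hp : ∀ i, ∑ b, p i b = 1) : ∑ g : ι → β, ∏ i, p i (g i) = 1 := by
  simp [← Fintype.prod_sum, hp]

theorem sum_prod_mul_apply_eq (hp : ∀ i, ∑ b, p i b = 1) (i : ι) (X : β → (ι → β) → R)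
    (hX : ∀ b g c, X b (update g i c) = X b g) :
    ∑ g : ι → β, (∏ j, p j (g j)) * X (g i) g =
      ∑ b, p i b * ∑ g : ι → β, (∏ j, p j (g j)) * X b g := by
  set e := Equiv.funSplitAt i β
  have hsplit (F : (ι → β) → R) : ∑ g, F g = ∑ b, ∑ h, F (e.symm (b, h)) := by
    rw [← e.symm.sum_comp, Fintype.sum_prod_type]
  have he (b h) : e.symm (b, h) i = b := by simp [e]
  have hW (b h) : ∏ j, p j (e.symm (b, h) j) = p i b * ∏ j : {j // j ≠ i}, p j (h j) := by
    rw [Fintype.prod_eq_mul_prod_subtype_ne _ i, he]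
    congr 1
    exact prod_congr rfl fun j _ => by simp [e, j.2]
  have hX' (b c h) : X b (e.symm (c, h)) = X b (e.symm (b, h)) := by
    rw [← hX b (e.symm (b, h)) c]
    congr 1
    ext j
    by_cases hj : j = i <;> simp [e, hj]
  simp only [hsplit, hW, he, hX', mul_assoc, ← mul_sum, ← sum_mul, hp, one_mul]

end ProductWeights

theorem isFixedPt_iterate_card {α : Type*} [Fintype α] {h : Finset α → Finset α}
    (hh : ∀ C, C ⊆ h C) (C : Finset α) : IsFixedPt h (h^[Fintype.card α] C) := by
  have key (n : ℕ) : IsFixedPt h (h^[n] C) ∨ n ≤ (h^[n] C).card := by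
    induction n with
    | zero => simp
    | succ n ih =>
      rw [iterate_succ_apply']
      by_cases hfix : IsFixedPt h (h^[n] C)
      · exact Or.inl (hfix.eq.symm ▸ hfix)
      · have := card_lt_card ((hh _).ssubset_of_ne (Ne.symm hfix))
        exact Or.inr (by have := ih.resolve_left hfix; omega)
  refine (key _).elim id fun hcard => ?_
  rw [eq_univ_of_card _ (le_antisymm (card_le_univ _) hcard)]
  exact univ_subset_iff.mp (hh _)

theorem measure_pi_inter_eval_preimage {ι : Type*} [Fintype ι] [DecidableEq ι] {α : ι → Type*}
    [∀ i, MeasurableSpace (α i)] (μ : ∀ i, Measure (α i)) [∀ i, IsProbabilityMeasure (μ i)]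
    {s : Set (∀ i, α i)} (hs : MeasurableSet s) (i : ι) (hsi : ∀ x a, update x i a ∈ s ↔ x ∈ s)
    {t : Set (α i)} (ht : MeasurableSet t) :
    Measure.pi μ (s ∩ eval i ⁻¹' t) = μ i t * Measure.pi μ s := by
  obtain rfl | ⟨x₀, -⟩ := s.eq_empty_or_nonempty
  · simp
  have hind : IndepFun (fun x (j : ({i}ᶜ : Finset ι)) => x j)
      (fun x (j : ({i} : Finset ι)) => x j) (Measure.pi μ) :=
    (iIndepFun_pi (X := fun _ => id) fun _ => aemeasurable_id).indepFun_finset _ _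
      disjoint_compl_left fun j => measurable_pi_apply j
  let ext (σ : ∀ j : ({i}ᶜ : Finset ι), α j) (j : ι) : α j :=
    if hj : j = i then x₀ j else σ ⟨j, by simpa using hj⟩
  have hext : Measurable ext := by
    refine measurable_pi_lambda _ fun j => ?_
    by_cases hj : j = i
    · simp only [ext, hj, dite_true]
      exact measurable_const
    · simp only [ext, hj, dite_false]
      exact measurable_pi_apply _
  have hs' : s = (fun x (j : ({i}ᶜ : Finset ι)) => x j) ⁻¹' (ext ⁻¹' s) := by
    ext x
    rw [Set.mem_preimage, Set.mem_preimage, ← hsi x (x₀ i)]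
    congr!
    ext j
    by_cases hj : j = i
    · subst hj
      simp [ext]
    · simp [ext, hj]
  have ht' : eval i ⁻¹' t =
      (fun x (j : ({i} : Finset ι)) => x j) ⁻¹' ((· ⟨i, mem_singleton_self i⟩) ⁻¹' t) := rfl
  rw [ht', hs', hind.measure_inter_preimage_eq_mul _ _ (hext hs) (measurable_pi_apply _ ht),
    ← ht', (measurePreserving_eval μ i).measure_preimage ht.nullMeasurableSet, mul_comm]

theorem measureReal_eq_sum_inter_fiber {Ω β : Type*} [MeasurableSpace Ω] {μ : Measure Ω}
    [IsFiniteMeasure μ] [Fintype β] {f : Ω → β} (hf : ∀ b, MeasurableSet (f ⁻¹' {b}))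
    (s : Set Ω) : μ.real s = ∑ b, μ.real (f ⁻¹' {b} ∩ s) := by
  simp_rw [← measureReal_restrict_apply (hf _)]
  rw [sum_measureReal_preimage_singleton _ fun b _ => hf b]
  simp

instance : IsProbabilityMeasure (volume.restrict (Set.Icc (0 : ℝ) 1)) := ⟨by simp⟩

theorem measureReal_restrict_Icc_Iic {a : ℝ} (ha : a ∈ Set.Icc 0 1) :
    (volume.restrict (Set.Icc (0 : ℝ) 1)).real (Set.Iic a) = a := by
  rw [measureReal_restrict_apply measurableSet_Iic,
    show Set.Iic a ∩ Set.Icc 0 1 = Set.Icc 0 a by grind]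
  simp [ha.1]

theorem traceAux_congr {α : Type} [DecidableEq α] {g g' : α → Option α} {Ns : Finset α}
    (m : ℕ) (u : α) (acc : Finset (Option α)) (h : ∀ y, (y = u ∨ some y ∉ acc) → g y = g' y) :
    traceAux g Ns m u acc = traceAux g' Ns m u acc := by
  induction m generalizing u acc with
  | zero => rfl
  | succ m ih =>
    simp only [traceAux, h u (Or.inl rfl)]
    split
    · rfl
    · split_ifs with hv
      · rfl
      · rfl
      · refine ih _ _ fun y hy => h y (Or.inr ?_)
        rcases hy with rfl | hy
        exacts [hv, fun h' => hy (mem_insert_of_mem h')]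

theorem traceAux_update {α : Type} [DecidableEq α] {g : α → Option α} {Ns : Finset α} {m : ℕ}
    {u y : α} {acc : Finset (Option α)} (hy : some y ∈ acc) (hyu : y ≠ u) (c : Option α) :
    traceAux (update g y c) Ns m u acc = traceAux g Ns m u acc :=
  traceAux_congr m u acc fun z hz =>
    update_of_ne (β := fun _ => Option α) (by rintro rfl; exact hz.elim hyu (· hy)) c g

theorem none_notMem_traceAux_succ_iff (g : V → Option V) (Ns S : Finset V) {m : ℕ} {u : V} :
    none ∉ traceAux g Ns (m + 1) u (Sᶜ.image some) ↔
      ∃ x, g u = some x ∧ x ∈ S ∧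
        (x ∈ Ns ∨ none ∉ traceAux g Ns m x ((S.erase x)ᶜ.image some)) := by
  cases hgu : g u with
  | none => simp [traceAux, hgu]
  | some x =>
    by_cases hx : x ∈ S
    · by_cases hxN : x ∈ Ns
      · simp [traceAux, hgu, hx, hxN]
      · simp [traceAux, hgu, hx, hxN, compl_erase, image_insert]
    · simp [traceAux, hgu, hx]

namespace FriendNet

noncomputable def reachProb (net : FriendNet V) (S : Finset V) (v : V) : ℝ :=
  if v ∈ net.Nbr net.s then 1
  else if v ∈ S then ∑ u, net.w u v * net.reachProb (S.erase v) u
  else 0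
termination_by S.card
decreasing_by exact card_erase_lt_of_mem ‹_›

noncomputable def choiceWeight (net : FriendNet V) (v : V) (o : Option V) : ℝ :=
  o.elim (1 - ∑ u, net.w u v) fun u => net.w u v

instance : IsProbabilityMeasure (thetaMeasure V) := by
  unfold thetaMeasure
  infer_instance

variable {net : FriendNet V}

theorem w_nonneg (u v : V) : 0 ≤ net.w u v := by
  by_cases h : net.G.Adj u v
  · exact (net.w_pos u v h).le
  · rw [net.w_eq_zero u v h]

theorem sum_w_mono {C C' : Finset V} (h : C ⊆ C') (v : V) :
    ∑ u ∈ C, net.w u v ≤ ∑ u ∈ C', net.w u v :=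
  sum_le_sum_of_subset_of_nonneg h fun u _ _ => w_nonneg u v

theorem sum_w_mem_Icc (C : Finset V) (v : V) : ∑ u ∈ C, net.w u v ∈ Set.Icc 0 1 :=
  ⟨sum_nonneg fun u _ => w_nonneg u v, (sum_w_mono (subset_univ C) v).trans (net.w_sum_le_one v)⟩

theorem mem_Nbr {u v : V} : u ∈ net.Nbr v ↔ net.G.Adj u v := by
  simp [Nbr]

theorem t_notMem_Nbr : net.t ∉ net.Nbr net.s :=
  fun h => net.t_not_friend (mem_Nbr.1 h).symm

theorem reachProb_of_mem_Nbr {S : Finset V} {v : V} (h : v ∈ net.Nbr net.s) :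
    net.reachProb S v = 1 := by
  rw [reachProb, if_pos h]

theorem reachProb_of_mem {S : Finset V} {v : V} (hN : v ∉ net.Nbr net.s) (hS : v ∈ S) :
    net.reachProb S v = ∑ u, net.w u v * net.reachProb (S.erase v) u := by
  rw [reachProb, if_neg hN, if_pos hS]

theorem reachProb_of_notMem {S : Finset V} {v : V} (hN : v ∉ net.Nbr net.s) (hS : v ∉ S) :
    net.reachProb S v = 0 := by
  rw [reachProb, if_neg hN, if_neg hS]

section Friending

variable {θ θ' : V → ℝ} {I I' C : Finset V}

theorem mem_Cstep {u : V} :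
    u ∈ net.Cstep θ I C ↔ u ∈ C ∨ θ u ≤ ∑ v ∈ C, net.w v u ∧ u ∈ I := by
  simp only [Cstep, Phi, mem_union, mem_inter, mem_filter, mem_univ, true_and]
  tauto

theorem subset_Cstep : C ⊆ net.Cstep θ I C := subset_union_left

theorem monotone_Cstep : Monotone (net.Cstep θ I) := fun C C' h u => by
  simp only [mem_Cstep]
  exact Or.imp (@h u) fun hu => ⟨hu.1.trans (sum_w_mono h u), hu.2⟩

theorem Cstep_Cinf : net.Cstep θ I (net.Cinf θ I) = net.Cinf θ I :=
  isFixedPt_iterate_card (fun _ => subset_Cstep) _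

theorem Nbr_subset_Cinf : net.Nbr net.s ⊆ net.Cinf θ I :=
  id_le_iterate_of_id_le (fun _ => subset_Cstep) _ _

theorem Cinf_subset_of_Cstep_subset (hN : net.Nbr net.s ⊆ C) (hC : net.Cstep θ I C ⊆ C) :
    net.Cinf θ I ⊆ C :=
  monotone_Cstep.seq_le_seq (x := fun n => (net.Cstep θ I)^[n] _) (y := fun _ => C) _ hN
    (fun _ _ => (iterate_succ_apply' _ _ _).le) fun _ _ => hC

theorem Cinf_subset_Nbr_union : net.Cinf θ I ⊆ net.Nbr net.s ∪ I :=
  Cinf_subset_of_Cstep_subset subset_union_left fun _ hu =>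
    (mem_Cstep.1 hu).elim id fun hu => mem_union_right _ hu.2

theorem Cinf_mono (hI : I ⊆ I') : net.Cinf θ I ⊆ net.Cinf θ I' := by
  refine Cinf_subset_of_Cstep_subset Nbr_subset_Cinf fun u hu => ?_
  rw [← Cstep_Cinf, mem_Cstep]
  exact (mem_Cstep.1 hu).imp_right fun hu => ⟨hu.1, hI hu.2⟩

theorem mem_Cinf_iff {v : V} (hvI : v ∈ I) (hvN : v ∉ net.Nbr net.s) :
    v ∈ net.Cinf θ I ↔ θ v ≤ ∑ u ∈ net.Cinf θ (I.erase v), net.w u v := by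
  set D := net.Cinf θ (I.erase v)
  constructor
  · intro hv
    by_contra hlt
    have hvD : v ∉ D := fun h =>
      (mem_union.1 (Cinf_subset_Nbr_union h)).elim hvN (notMem_erase v I)
    refine hvD (Cinf_subset_of_Cstep_subset Nbr_subset_Cinf (fun u hu => ?_) hv)
    obtain hu | ⟨hθ, huI⟩ := mem_Cstep.1 hu
    · exact hu
    · have huv : u ≠ v := by
        rintro rfl
        exact hlt hθ
      rw [← Cstep_Cinf]
      exact mem_Cstep.2 (Or.inr ⟨hθ, mem_erase.2 ⟨huv, huI⟩⟩)
  · intro hθ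
    rw [← Cstep_Cinf]
    exact mem_Cstep.2 (Or.inr ⟨hθ.trans (sum_w_mono (Cinf_mono (erase_subset v I)) v), hvI⟩)

theorem Cinf_congr
    (h : ∀ u ∈ I, ∀ C : Finset V, θ u ≤ ∑ x ∈ C, net.w x u ↔ θ' u ≤ ∑ x ∈ C, net.w x u) :
    net.Cinf θ I = net.Cinf θ' I := by
  have : net.Cstep θ I = net.Cstep θ' I := by
    ext C u
    simp only [mem_Cstep]
    exact or_congr_right
      ⟨fun hu => ⟨(h u hu.2 C).1 hu.1, hu.2⟩, fun hu => ⟨(h u hu.2 C).2 hu.1, hu.2⟩⟩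
  rw [Cinf, Cinf, this]

theorem Cinf_update {v : V} (hv : v ∉ I) (a : ℝ) : net.Cinf (update θ v a) I = net.Cinf θ I :=
  Cinf_congr fun u hu _ => by rw [update_of_ne (ne_of_mem_of_not_mem hu hv)]

theorem measurableSet_Cinf_eq (I C : Finset V) :
    MeasurableSet {θ : V → ℝ | net.Cinf θ I = C} := by
  let φ (θ : V → ℝ) (p : V × Finset V) : Prop := θ p.1 ≤ ∑ x ∈ p.2, net.w x p.1
  have hφ : Measurable φ := measurable_pi_lambda _ fun p =>
    measurableSet_setOfPred.1 (measurableSet_le (measurable_pi_apply p.1) measurable_const)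
  -- `Cinf θ I` only depends on the finitely many comparisons recorded by `φ θ`
  have hsat : {θ | net.Cinf θ I = C} = φ ⁻¹' (φ '' {θ | net.Cinf θ I = C}) := by
    refine (Set.subset_preimage_image _ _).antisymm ?_
    rintro θ ⟨θ', hθ', hφθ⟩
    change net.Cinf θ I = C
    rw [← hθ']
    exact Cinf_congr fun u _ C => Iff.of_eq (congrFun hφθ (u, C)).symm
  rw [hsat]
  exact hφ (Set.toFinite _).measurableSet

end Friending

theorem thetaMeasure_real_inter_le {s : Set (V → ℝ)} (hs : MeasurableSet s) {v : V}
    (hsv : ∀ θ a, update θ v a ∈ s ↔ θ ∈ s) {a : ℝ} (ha : a ∈ Set.Icc 0 1) :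
    (thetaMeasure V).real (s ∩ {θ | θ v ≤ a}) = a * (thetaMeasure V).real s := by
  rw [measureReal_def, measureReal_def, thetaMeasure,
    show {θ : V → ℝ | θ v ≤ a} = eval v ⁻¹' Set.Iic a from rfl,
    measure_pi_inter_eval_preimage _ hs v hsv measurableSet_Iic, ENNReal.toReal_mul,
    ← measureReal_def, measureReal_restrict_Icc_Iic ha]

theorem measureReal_le_sum_Cinf {J : Finset V} {v : V} (hv : v ∉ J) :
    (thetaMeasure V).real {θ | θ v ≤ ∑ u ∈ net.Cinf θ J, net.w u v} =
      ∑ u, net.w u v * (thetaMeasure V).real {θ | u ∈ net.Cinf θ J} := by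
  set μ := thetaMeasure V
  set D := fun θ => net.Cinf θ J
  have hD (C : Finset V) : MeasurableSet (D ⁻¹' {C}) := measurableSet_Cinf_eq J C
  have hmem (u : V) : μ.real {θ | u ∈ D θ} = ∑ C ∈ univ.filter (u ∈ ·), μ.real (D ⁻¹' {C}) := by
    rw [sum_measureReal_preimage_singleton _ fun C _ => hD C]
    congr 1
    ext θ
    simp
  calc μ.real {θ | θ v ≤ ∑ u ∈ D θ, net.w u v}
      = ∑ C, μ.real (D ⁻¹' {C} ∩ {θ | θ v ≤ ∑ u ∈ C, net.w u v}) := by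
        rw [measureReal_eq_sum_inter_fiber hD]
        congr! 2 with C
        ext θ
        simp +contextual [D]
    _ = ∑ C, ∑ u ∈ C, net.w u v * μ.real (D ⁻¹' {C}) := by
        simp only [← sum_mul]
        exact sum_congr rfl fun C _ => thetaMeasure_real_inter_le (hD C)
          (fun θ a => by simp [D, Cinf_update hv]) (sum_w_mem_Icc C v)
    _ = ∑ u, net.w u v * μ.real {θ | u ∈ D θ} := by
        simp only [hmem, mul_sum]
        exact sum_comm' (by simp)

theorem measureReal_mem_Cinf (I : Finset V) (v : V) :
    (thetaMeasure V).real {θ | v ∈ net.Cinf θ I} = net.reachProb I v := by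
  induction I using Finset.strongInduction generalizing v with
  | H I ih =>
  by_cases hvN : v ∈ net.Nbr net.s
  · simp [reachProb_of_mem_Nbr hvN, Nbr_subset_Cinf hvN]
  by_cases hvI : v ∈ I
  · simp_rw [mem_Cinf_iff hvI hvN, measureReal_le_sum_Cinf (notMem_erase v I),
      ih _ (erase_ssubset hvI), reachProb_of_mem hvN hvI]
  · have hv (θ : V → ℝ) : v ∉ net.Cinf θ I := fun h =>
      (mem_union.1 (Cinf_subset_Nbr_union h)).elim hvN hvI
    simp [reachProb_of_notMem hvN hvI, hv]

theorem f_eq_reachProb (I : Finset V) : net.f I = net.reachProb I net.t :=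
  measureReal_mem_Cinf I net.t

theorem f_mono {I I' : Finset V} (h : I ⊆ I') : net.f I ≤ net.f I' :=
  measureReal_mono fun _ hθ => Cinf_mono h hθ

theorem sum_choiceWeight (v : V) : ∑ o, net.choiceWeight v o = 1 := by
  simp [Fintype.sum_option, choiceWeight]

theorem sum_realWeight : ∑ g, net.realWeight g = 1 :=
  sum_prod_eq_one sum_choiceWeight

theorem sum_realWeight_traceAux (m : ℕ) {S : Finset V} {u : V} (huS : u ∉ S)
    (huN : u ∉ net.Nbr net.s) (hNS : net.Nbr net.s ⊆ S) (hm : S.card < m) :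
    ∑ g, net.realWeight g *
        (if none ∉ traceAux g (net.Nbr net.s) m u (Sᶜ.image some) then 1 else 0) =
      net.reachProb (insert u S) u := by
  induction m generalizing S u with
  | zero => omega
  | succ m ih =>
  set Ns := net.Nbr net.s
  let X (o : Option V) (g : V → Option V) : ℝ := o.elim 0 fun x =>
    if x ∈ S ∧ (x ∈ Ns ∨ none ∉ traceAux g Ns m x ((S.erase x)ᶜ.image some)) then 1 else 0
  have hX (o g c) : X o (update g u c) = X o g := by
    cases o with
    | none => rfl
    | some x =>
      by_cases hx : x ∈ S
      · have hu : some u ∈ (S.erase x)ᶜ.image some := mem_image_of_mem _ (by simp [huS])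
        simp only [X, Option.elim, traceAux_update hu (ne_of_mem_of_not_mem hx huS).symm]
      · simp [X, hx]
  have hterm (x : V) : ∑ g, net.realWeight g * X (some x) g = net.reachProb S x := by
    by_cases hxS : x ∈ S
    · by_cases hxN : x ∈ Ns
      · simp [X, hxS, hxN, reachProb_of_mem_Nbr hxN, sum_realWeight]
      · have := ih (S := S.erase x) (u := x) (notMem_erase x S) hxN
          (fun y hy => mem_erase.2 ⟨ne_of_mem_of_not_mem hy hxN, hNS hy⟩)
          (by have := card_pos.2 ⟨x, hxS⟩; rw [card_erase_of_mem hxS]; omega)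
        rw [insert_erase hxS] at this
        simpa [X, hxS, hxN] using this
    · simp [X, hxS, reachProb_of_notMem (fun h => hxS (hNS h)) hxS]
  calc _ = ∑ g, (∏ v, net.choiceWeight v (g v)) * X (g u) g := by
        congr! 2 with g
        cases hgu : g u <;> simp [X, none_notMem_traceAux_succ_iff, hgu]
    _ = ∑ o, net.choiceWeight u o * ∑ g, (∏ v, net.choiceWeight v (g v)) * X o g :=
        sum_prod_mul_apply_eq sum_choiceWeight u X hX
    _ = ∑ x, net.w x u * net.reachProb S x := by
        simp [Fintype.sum_option, X, choiceWeight, ← hterm, realWeight]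
    _ = net.reachProb (insert u S) u := by
        rw [reachProb_of_mem huN (mem_insert_self u S), erase_insert huS]

theorem expected_type_eq_reachProb :
    ∑ g, net.realWeight g * (if (none : Option V) ∉ net.trace g then (1 : ℝ) else 0) =
      net.reachProb univ net.t := by
  have hNS : net.Nbr net.s ⊆ {net.t}ᶜ := fun y hy =>
    mem_compl.2 <| notMem_singleton.2 (ne_of_mem_of_not_mem hy t_notMem_Nbr)
  have := sum_realWeight_traceAux (Fintype.card V + 1) (by simp) t_notMem_Nbr hNS
    (Nat.lt_succ_of_le (card_le_univ _))
  rwa [compl_compl, image_singleton, insert_compl_self] at this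

end FriendNet

/-- Corollary 2: the probability that a random realization `ĝ` is
type-1 (i.e. `E[y(ĝ)]`) equals `f(V)`, which in turn equals `p_max`. -/
theorem expected_type_eq_pmax (net : FriendNet V) :
    (∑ g : V → Option V,
        net.realWeight g * (if (none : Option V) ∉ net.trace g then (1 : ℝ) else 0))
      = net.f Finset.univ ∧
    net.f Finset.univ = net.pmax := by
  refine ⟨by rw [net.expected_type_eq_reachProb, net.f_eq_reachProb], ?_⟩
  exact le_antisymm (le_ciSup (Set.finite_range _).bddAbove _)
    (ciSup_le fun I => net.f_mono (subset_univ I))
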